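/- arXiv:1404.5690 — 5 statements merged into one kernel-verified Lean document; each statement's English description precedes it below -/
import Mathlib

section
/- The conformal moduli space of a finite simple graph G, i.e., the quotient of the space of weights by conformal equivalence, is isomorphic (as a set/vector space under the logarithm identification) to ℝ^{|E| − |V| + ω₀}, where ω₀ is the number of bipartite connected components of G. -/
open SimpleGraph

/-- A connected component `c` of `G` is bipartite if its vertices admit a proper
2-coloring (equivalently, it contains no odd cycle). -/
def IsBipartiteComponent {V : Type*} (G : SimpleGraph V) (c : G.ConnectedComponent) : Prop :=
  ∃ f : V → Bool, ∀ v w, G.Adj v w → G.connectedComponentMk v = c → f v ≠ f w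

/-- The number of bipartite connected components of `G`. -/
noncomputable def numBipartiteComponents {V : Type*} (G : SimpleGraph V) : ℕ :=
  Nat.card {c : G.ConnectedComponent // IsBipartiteComponent G c}

/-- The unsigned vertex-edge incidence matrix of `G` over `ℝ`. -/
def incidenceMatrixUnsigned {V : Type*} [Fintype V] [DecidableEq V] (G : SimpleGraph V)
    [DecidableRel G.Adj] : Matrix V G.edgeSet ℝ :=
  Matrix.of fun v e => if v ∈ (e : Sym2 V) then 1 else 0


/-! Rank–nullity reduces the claim to `dim ker Bᵀ = ω₀`. A vector `u` lies in `ker Bᵀ` iff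
`u a + u b = 0` across every edge, so along a walk `u` only changes by the sign `(-1) ^ length`.
Hence `u` vanishes on a component as soon as it vanishes at one vertex, and where `u ≠ 0` its sign
properly 2-colours the component; conversely, a 2-colouring of a bipartite component turns into a
`±1` kernel vector supported on it. So evaluation at one vertex per component identifies `ker Bᵀ`
with `ℝ` to the power of the set of bipartite components. -/

open Module

namespace SimpleGraph

variable {V : Type*}

section EdgeSumZero

variable {R : Type*} {G : SimpleGraph V} {u : V → R}

theorem Walk.apply_eq_neg_one_pow_mul_of_adj_add_eq_zero [CommRing R]
    (h : ∀ a b, G.Adj a b → u a + u b = 0) {v w : V} (p : G.Walk v w) :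
    u w = (-1) ^ p.length * u v := by
  induction p with
  | nil => simp
  | @cons a b c hab p ih =>
    rw [ih, length_cons, pow_succ, eq_neg_of_add_eq_zero_right (h a b hab)]
    ring

theorem Reachable.eq_zero_of_adj_add_eq_zero [CommRing R]
    (h : ∀ a b, G.Adj a b → u a + u b = 0) {v w : V} (hvw : G.Reachable v w) (hv : u v = 0) :
    u w = 0 := by
  obtain ⟨p⟩ := hvw
  rw [p.apply_eq_neg_one_pow_mul_of_adj_add_eq_zero h, hv, mul_zero]

theorem isBipartiteComponent_of_adj_add_eq_zero [CommRing R] [LinearOrder R] [IsOrderedRing R]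
    (h : ∀ a b, G.Adj a b → u a + u b = 0) {v : V} (hv : u v ≠ 0) :
    IsBipartiteComponent G (G.connectedComponentMk v) := by
  refine ⟨fun w => decide (0 < u w), fun a b hab hav hsign => ?_⟩
  have ha : u a ≠ 0 := fun ha =>
    hv ((ConnectedComponent.exact hav).eq_zero_of_adj_add_eq_zero h ha)
  simp only [eq_neg_of_add_eq_zero_right (h a b hab), decide_eq_decide, neg_pos] at hsign
  rcases ha.lt_or_gt with ha | ha
  · exact ha.not_gt (hsign.mpr ha)
  · exact ha.not_gt (hsign.mp ha)

end EdgeSumZero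

section SignedIndicator

variable {G : SimpleGraph V}

open scoped Classical in
noncomputable def signedIndicator (c : G.ConnectedComponent) (f : V → Bool) : V → ℝ :=
  fun v => if G.connectedComponentMk v = c then (if f v = f c.out then 1 else -1) else 0

theorem signedIndicator_adj_add_eq_zero {c : G.ConnectedComponent} {f : V → Bool}
    (hf : ∀ v w, G.Adj v w → G.connectedComponentMk v = c → f v ≠ f w) {a b : V}
    (hab : G.Adj a b) : signedIndicator c f a + signedIndicator c f b = 0 := by
  have hcomp : G.connectedComponentMk a = G.connectedComponentMk b :=
    ConnectedComponent.sound hab.reachable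
  unfold signedIndicator
  by_cases hac : G.connectedComponentMk a = c
  · have hfab := hf a b hab hac
    rw [if_pos hac, if_pos (hcomp.symm.trans hac)]
    revert hfab
    cases f a <;> cases f b <;> cases f c.out <;> norm_num
  · rw [if_neg hac, if_neg fun hbc => hac (hcomp.trans hbc), add_zero]

open scoped Classical in
theorem signedIndicator_out (c d : G.ConnectedComponent) (f : V → Bool) :
    signedIndicator c f d.out = if d = c then 1 else 0 := by
  unfold signedIndicator
  rw [show G.connectedComponentMk d.out = d from d.out_eq]
  split_ifs with h <;> simp_all

end SignedIndicator

section Incidence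

variable [Fintype V] [DecidableEq V] (G : SimpleGraph V) [DecidableRel G.Adj]

theorem incidenceMatrixUnsigned_transpose_mulVecLin_apply_mk (u : V → ℝ) {a b : V}
    (hab : G.Adj a b) :
    (incidenceMatrixUnsigned G).transpose.mulVecLin u ⟨s(a, b), hab⟩ = u a + u b := by
  simp only [Matrix.mulVecLin_apply, Matrix.mulVec, dotProduct, Matrix.transpose_apply,
    incidenceMatrixUnsigned, Matrix.of_apply, Sym2.mem_iff, ite_mul, one_mul, zero_mul]
  rw [← Finset.sum_filter, ← Finset.sum_pair hab.ne]
  congr 1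
  ext
  simp

theorem mem_ker_incidenceMatrixUnsigned_transpose_iff (u : V → ℝ) :
    u ∈ LinearMap.ker (incidenceMatrixUnsigned G).transpose.mulVecLin ↔
      ∀ a b, G.Adj a b → u a + u b = 0 := by
  refine ⟨fun hu a b hab => ?_, fun hu => LinearMap.mem_ker.mpr (funext fun ⟨e, he⟩ => ?_)⟩
  · rw [← incidenceMatrixUnsigned_transpose_mulVecLin_apply_mk G u hab]
    exact congrFun (LinearMap.mem_ker.mp hu) _
  · induction e with
    | h a b => exact (incidenceMatrixUnsigned_transpose_mulVecLin_apply_mk G u he).trans (hu a b he)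

theorem finrank_ker_incidenceMatrixUnsigned_transpose :
    finrank ℝ (LinearMap.ker (incidenceMatrixUnsigned G).transpose.mulVecLin) =
      numBipartiteComponents G := by
  classical
  set K := LinearMap.ker (incidenceMatrixUnsigned G).transpose.mulVecLin
  let ι := {c : G.ConnectedComponent // IsBipartiteComponent G c}
  have hK (u : K) := (mem_ker_incidenceMatrixUnsigned_transpose_iff G u).mp u.2
  let Φ : K →ₗ[ℝ] ι → ℝ :=
    (LinearMap.pi fun c : ι => LinearMap.proj c.1.out).comp K.subtype
  have hΦ_inj : Function.Injective Φ := by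
    refine (injective_iff_map_eq_zero Φ).mpr fun u hu => Subtype.ext (funext fun v => ?_)
    by_contra hv
    have hrep : (u : V → ℝ) (G.connectedComponentMk v).out = 0 :=
      congrFun hu ⟨_, isBipartiteComponent_of_adj_add_eq_zero (hK u) hv⟩
    exact hv ((ConnectedComponent.exact (G.connectedComponentMk v).out_eq)
      |>.eq_zero_of_adj_add_eq_zero (hK u) hrep)
  have hΦ_surj : Function.Surjective Φ := by
    intro x
    let e (c : ι) : K := ⟨signedIndicator c.1 c.2.choose,
      (mem_ker_incidenceMatrixUnsigned_transpose_iff G _).mpr fun _ _ =>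
        signedIndicator_adj_add_eq_zero c.2.choose_spec⟩
    have hΦe (c : ι) : Φ (e c) = Pi.single c 1 := by
      funext d
      simp [Φ, e, signedIndicator_out, Pi.single_apply, Subtype.coe_inj]
    refine ⟨∑ c, x c • e c, ?_⟩
    simp only [map_sum, map_smul, hΦe, ← Pi.single_smul', smul_eq_mul, mul_one]
    exact Finset.univ_sum_single x
  rw [(LinearEquiv.ofBijective Φ ⟨hΦ_inj, hΦ_surj⟩).finrank_eq, finrank_fintype_fun_eq_card,
    numBipartiteComponents, Nat.card_eq_fintype_card]

end Incidence

end SimpleGraph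

/-- Under the logarithm identification, the space of weights is `ℝ^{|E|}` and the
conformal class of any weight is a coset of the image of `Bᵀ`.  The conformal moduli
space, i.e. the quotient of the space of weights by conformal equivalence, is linearly
isomorphic to `ℝ^{|E| − |V| + ω₀}`, where `ω₀` is the number of bipartite components. -/
theorem moduli_space_iso {V : Type*} [Fintype V] [DecidableEq V]
    (G : SimpleGraph V) [DecidableRel G.Adj] :
    Nonempty (((G.edgeSet → ℝ) ⧸
        LinearMap.range (incidenceMatrixUnsigned G).transpose.mulVecLin) ≃ₗ[ℝ]
      (Fin (Fintype.card G.edgeSet -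
        (Fintype.card V - numBipartiteComponents G)) → ℝ)) := by
  set B := (incidenceMatrixUnsigned G).transpose.mulVecLin
  have h_rank_nullity := LinearMap.finrank_range_add_finrank_ker B
  have h_quotient := (LinearMap.range B).finrank_quotient_add_finrank
  rw [finrank_ker_incidenceMatrixUnsigned_transpose, finrank_fintype_fun_eq_card]
    at h_rank_nullity
  rw [finrank_fintype_fun_eq_card] at h_quotient
  refine FiniteDimensional.nonempty_linearEquiv_of_finrank_eq ?_
  rw [finrank_fintype_fun_eq_card, Fintype.card_fin]
  -- the two dimension formulas also show that neither `ℕ`-subtraction truncates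
  omega
end

section
/- In each conformal class of weights on a finite simple graph G, there exists a unique representative w̄ such that for every vertex v, the product of w̄(e) over all edges e incident to v equals 1. -/
/-!
Taking logarithms makes the problem linear. Let `B : ℝ^V → ℝ^E` send `u` to
`e = ij ↦ u i + u j`. The conformal class of `w` becomes the affine subspace
`log w + range B`, and since `⟪B u, z⟫ = ∑ v, u v * ∑ (e ∋ v), z e`, the normalisation says
exactly that `log w̄ ⊥ range B`. So `log w̄` must be the orthogonal projection of `log w` onto
`(range B)ᗮ`, which exists and is unique.
-/

open SimpleGraph Finset

theorem Submodule.existsUnique_mem_orthogonal_sub_mem {E : Type*} [NormedAddCommGroup E]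
    [InnerProductSpace ℝ E] (K : Submodule ℝ E) [K.HasOrthogonalProjection] (x : E) :
    ∃! y, y ∈ Kᗮ ∧ y - x ∈ K := by
  obtain ⟨k, hk, z, hz, rfl⟩ := K.exists_add_mem_mem_orthogonal x
  refine ⟨z, ⟨hz, by simpa using K.neg_mem hk⟩, fun y ⟨hy, hyx⟩ => ?_⟩
  have hK : y - z ∈ K := by
    rw [show y - z = y - (k + z) + k by abel]
    exact K.add_mem hyx hk
  exact sub_eq_zero.mp (Submodule.disjoint_def.mp K.orthogonal_disjoint _ hK (Kᗮ.sub_mem hy hz))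

theorem existsUnique_pos_of_existsUnique_log {ι : Type*} {p : EuclideanSpace ℝ ι → Prop}
    (h : ∃! y, p y) :
    ∃! f : ι → ℝ, (∀ i, 0 < f i) ∧ p (WithLp.toLp 2 fun i => Real.log (f i)) := by
  obtain ⟨y, hy, huniq⟩ := h
  refine ⟨fun i => Real.exp (y i), ⟨fun i => Real.exp_pos _, by simpa using hy⟩, ?_⟩
  rintro f ⟨hf, hpf⟩
  funext i
  rw [← huniq _ hpf]
  simp [Real.exp_log (hf i)]

theorem Real.eq_mul_exp_iff {a b t : ℝ} (ha : 0 < a) (hb : 0 < b) :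
    b = a * Real.exp t ↔ t = Real.log b - Real.log a := by
  rw [eq_sub_iff_add_eq', ← Real.exp_eq_exp (x := Real.log a + t), Real.exp_add, Real.exp_log ha,
    Real.exp_log hb, eq_comm]

namespace SimpleGraph

variable {V : Type*} (G : SimpleGraph V)

theorem forall_edgeSet_iff {P : G.edgeSet → Prop} :
    (∀ e, P e) ↔ ∀ i j (h : G.Adj i j), P ⟨s(i, j), h⟩ := by
  refine ⟨fun hP i j h => hP _, fun hP ⟨e, he⟩ => ?_⟩
  induction e using Sym2.ind
  exact hP _ _ he

variable [Fintype V] [DecidableEq V]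

/-- The map `B` above. Summing over the endpoints of `e` (rather than using `Sym2.lift`) turns its
adjoint in `inner_endpointSum` into a plain exchange of sums. -/
def endpointSum : (V → ℝ) →ₗ[ℝ] EuclideanSpace ℝ G.edgeSet where
  toFun u := WithLp.toLp 2 fun e => ∑ v ∈ univ.filter (· ∈ (e : Sym2 V)), u v
  map_add' u u' := by ext; simp [sum_add_distrib]
  map_smul' c u := by ext; simp [mul_sum]

theorem endpointSum_apply_mk (u : V → ℝ) {i j : V} (h : G.Adj i j) :
    G.endpointSum u ⟨s(i, j), h⟩ = u i + u j := by
  have : univ.filter (fun v => v = i ∨ v = j) = {i, j} := by ext; simp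
  simp [endpointSum, this, sum_pair h.ne]

theorem exists_conformal_iff {w wbar : G.edgeSet → ℝ} (hw : ∀ e, 0 < w e)
    (hwbar : ∀ e, 0 < wbar e) :
    (∃ u : V → ℝ, ∀ i j, (h : G.Adj i j) →
        wbar ⟨s(i, j), h⟩ = w ⟨s(i, j), h⟩ * Real.exp (u i + u j)) ↔
      (WithLp.toLp 2 fun e => Real.log (wbar e)) - (WithLp.toLp 2 fun e => Real.log (w e)) ∈
        LinearMap.range G.endpointSum := by
  refine exists_congr fun u => ?_
  rw [PiLp.ext_iff, G.forall_edgeSet_iff]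
  refine forall₂_congr fun i j => forall_congr' fun h => ?_
  rw [endpointSum_apply_mk, Real.eq_mul_exp_iff (hw _) (hwbar _)]
  rfl

variable [DecidableRel G.Adj]

theorem inner_endpointSum (u : V → ℝ) (z : EuclideanSpace ℝ G.edgeSet) :
    inner ℝ (G.endpointSum u) z =
      ∑ v, u v * ∑ e ∈ univ.filter (fun e : G.edgeSet => v ∈ (e : Sym2 V)), z e := by
  simp only [PiLp.inner_apply, RCLike.inner_apply, conj_trivial, endpointSum, LinearMap.coe_mk,
    AddHom.coe_mk, mul_sum]
  exact (sum_comm' fun e v => by simp).trans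
    (sum_congr rfl fun v _ => sum_congr rfl fun e _ => mul_comm _ _)

theorem mem_orthogonal_range_endpointSum_iff (z : EuclideanSpace ℝ G.edgeSet) :
    z ∈ (LinearMap.range G.endpointSum)ᗮ ↔
      ∀ v, ∑ e ∈ univ.filter (fun e : G.edgeSet => v ∈ (e : Sym2 V)), z e = 0 := by
  simp only [Submodule.mem_orthogonal, LinearMap.mem_range, forall_exists_index,
    forall_apply_eq_imp_iff, inner_endpointSum]
  exact ⟨fun h v => by simpa [Pi.single_apply] using h (Pi.single v 1), fun h u => by simp [h]⟩

theorem forall_prod_incident_eq_one_iff {wbar : G.edgeSet → ℝ} (hwbar : ∀ e, 0 < wbar e) :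
    (∀ v, ∏ e ∈ univ.filter (fun e : G.edgeSet => v ∈ (e : Sym2 V)), wbar e = 1) ↔
      (WithLp.toLp 2 fun e => Real.log (wbar e)) ∈ (LinearMap.range G.endpointSum)ᗮ := by
  rw [mem_orthogonal_range_endpointSum_iff]
  refine forall_congr' fun v => ?_
  rw [← Real.exp_eq_one_iff, Real.exp_sum]
  simp [Real.exp_log, hwbar]

end SimpleGraph

/-- In each conformal class of positive weights on a finite simple graph `G`,
there is a unique representative `w̄` such that for every vertex the product of
`w̄` over the edges incident to it equals `1`. -/
theorem exists_unique_normalized_representative {V : Type*} [Fintype V] [DecidableEq V]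
    (G : SimpleGraph V) [DecidableRel G.Adj]
    (w : G.edgeSet → ℝ) (hw : ∀ e, 0 < w e) :
    ∃! wbar : G.edgeSet → ℝ,
      (∀ e, 0 < wbar e) ∧
      (∃ u : V → ℝ, ∀ i j, (h : G.Adj i j) →
        wbar ⟨s(i, j), h⟩ = w ⟨s(i, j), h⟩ * Real.exp (u i + u j)) ∧
      (∀ v : V, ∏ e ∈ univ.filter (fun e : G.edgeSet => v ∈ (e : Sym2 V)), wbar e = 1) := by
  have hlog := existsUnique_pos_of_existsUnique_log
    ((LinearMap.range G.endpointSum).existsUnique_mem_orthogonal_sub_mem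
      (WithLp.toLp 2 fun e => Real.log (w e)))
  refine (existsUnique_congr fun wbar => ?_).mp hlog
  exact ⟨fun ⟨hpos, hperp, hsub⟩ => ⟨hpos, (G.exists_conformal_iff hw hpos).mpr hsub,
      (G.forall_prod_incident_eq_one_iff hpos).mpr hperp⟩,
    fun ⟨hpos, hconf, hnorm⟩ => ⟨hpos, (G.forall_prod_incident_eq_one_iff hpos).mp hnorm,
      (G.exists_conformal_iff hw hpos).mp hconf⟩⟩
end

section
/- The generalized edge Laplacian Δ(F,w) := M(F,w)ᵀ·M(F,w) transforms under conformal change of weight as Δ(F,w̃) = D_u·Δ(F,w)·D_u, with D_u the diagonal matrix with entries e^{(u(eᵢ⁺)+u(eᵢ⁻))/2}; hence it is conformally covariant. -/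
open Matrix

/-- The signed/unsigned weighted vertex-edge incidence matrix `M(F,w)` of a graph with
vertex set `V` and oriented edge set `E` (each edge `e` has head `hd e` and tail `tl e`). -/
noncomputable def incidenceM {V E : Type*} [DecidableEq V] (hd tl : E → V)
    (F : Set E) [DecidablePred (· ∈ F)] (w : E → ℝ) : Matrix V E ℝ :=
  Matrix.of fun v e =>
    if e ∈ F then
      (if v = hd e then Real.sqrt (w e) else if v = tl e then -Real.sqrt (w e) else 0)
    else
      (if v = hd e ∨ v = tl e then Real.sqrt (w e) else 0)

/-- The generalized edge Laplacian `Δ(F,w) := M(F,w)ᵀ · M(F,w)`. -/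
noncomputable def edgeLaplacian {V E : Type*} [DecidableEq V] [Fintype V] (hd tl : E → V)
    (F : Set E) [DecidablePred (· ∈ F)] (w : E → ℝ) : Matrix E E ℝ :=
  (incidenceM hd tl F w).transpose * incidenceM hd tl F w

/- Multiplying the weight of each edge by `c e ^ 2` scales the corresponding column of the
incidence matrix by `c e`; since `Δ = Mᵀ M`, the Laplacian is then conjugated by `diagonal c`.
A conformal change of weight is the case `c e = e^{(u(e⁺)+u(e⁻))/2}`. -/

section ScaledWeights

variable {V E : Type*} [DecidableEq V] [Fintype E] [DecidableEq E] (hd tl : E → V)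
  (F : Set E) [DecidablePred (· ∈ F)] {w c : E → ℝ}

theorem incidenceM_mul_sq_eq_mul_diagonal (hw : ∀ e, 0 ≤ w e) (hc : ∀ e, 0 ≤ c e) :
    incidenceM hd tl F (fun e => w e * c e ^ 2) = incidenceM hd tl F w * diagonal c := by
  ext v e
  have hsqrt : Real.sqrt (w e * c e ^ 2) = Real.sqrt (w e) * c e := by
    rw [Real.sqrt_mul (hw e), Real.sqrt_sq (hc e)]
  simp only [incidenceM, mul_diagonal, of_apply, hsqrt]
  split_ifs <;> ring

theorem edgeLaplacian_mul_sq_eq_diagonal_mul_mul_diagonal [Fintype V]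
    (hw : ∀ e, 0 ≤ w e) (hc : ∀ e, 0 ≤ c e) :
    edgeLaplacian hd tl F (fun e => w e * c e ^ 2) =
      diagonal c * edgeLaplacian hd tl F w * diagonal c := by
  rw [edgeLaplacian, edgeLaplacian, incidenceM_mul_sq_eq_mul_diagonal hd tl F hw hc,
    transpose_mul, diagonal_transpose, Matrix.mul_assoc, Matrix.mul_assoc, Matrix.mul_assoc]

end ScaledWeights

theorem edgeLaplacian_conformally_covariant_general {V E : Type*} [Fintype V] [Fintype E]
    [DecidableEq V] [DecidableEq E] (hd tl : E → V)
    (F : Set E) [DecidablePred (· ∈ F)] (w : E → ℝ) (hw : ∀ e, 0 < w e) (u : V → ℝ) :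
    edgeLaplacian hd tl F (fun e => w e * Real.exp (u (hd e) + u (tl e))) =
      diagonal (fun e => Real.exp ((u (hd e) + u (tl e)) / 2)) *
        edgeLaplacian hd tl F w *
        diagonal (fun e => Real.exp ((u (hd e) + u (tl e)) / 2)) := by
  have hexp : ∀ e, Real.exp (u (hd e) + u (tl e)) = Real.exp ((u (hd e) + u (tl e)) / 2) ^ 2 :=
    fun e => by rw [← Real.exp_nat_mul]; ring_nf
  simp only [hexp]
  exact edgeLaplacian_mul_sq_eq_diagonal_mul_mul_diagonal hd tl F (fun e => (hw e).le)
    fun e => (Real.exp_pos _).le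

/-- Conformal covariance of the generalized edge Laplacian: for
`w̃ e = w e · e^{u(e⁺)+u(e⁻)}`, `Δ(F,w̃) = D_u · Δ(F,w) · D_u` with
`(D_u)_{ee} = e^{(u(e⁺)+u(e⁻))/2}`. -/
theorem edgeLaplacian_conformally_covariant {V E : Type*} [Fintype V] [Fintype E]
    [DecidableEq V] [DecidableEq E] (hd tl : E → V) (hsimple : ∀ e, hd e ≠ tl e)
    (F : Set E) [DecidablePred (· ∈ F)] (w : E → ℝ) (hw : ∀ e, 0 < w e) (u : V → ℝ) :
    edgeLaplacian hd tl F (fun e => w e * Real.exp (u (hd e) + u (tl e))) =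
      diagonal (fun e => Real.exp ((u (hd e) + u (tl e)) / 2)) *
        edgeLaplacian hd tl F w *
        diagonal (fun e => Real.exp ((u (hd e) + u (tl e)) / 2)) :=
  edgeLaplacian_conformally_covariant_general hd tl F w hw u
end

section
/- Let A(F,w) be a generalized adjacency matrix and suppose H ∈ ker A(F,w). For a conformal change w̃ = w·e^{u(vᵢ)+u(vⱼ)}, the function H̃(v) = e^{-u(v)}H(v) lies in ker A(F,w̃), and for every edge e = (v₁,v₂), H̃(v₁)H̃(v₂)w̃(e) = H(v₁)H(v₂)w(e); i.e., the edge function Ψ_H(e) := H(v₁)H(v₂)w(e) is a conformal invariant. -/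
open Matrix

/-- The generalized adjacency matrix `A(F,w)`: entry `−w i j` on edges in `F`,
`w i j` on edges not in `F`, and `0` off edges. -/
def genAdj {V : Type*} [Fintype V] (G : SimpleGraph V) [DecidableRel G.Adj]
    (F : Set (Sym2 V)) [DecidablePred (· ∈ F)] (w : V → V → ℝ) : Matrix V V ℝ :=
  Matrix.of fun i j =>
    if G.Adj i j then (if s(i, j) ∈ F then -(w i j) else w i j) else 0

section

variable {V : Type*} [Fintype V] [DecidableEq V] (G : SimpleGraph V) [DecidableRel G.Adj]
  (F : Set (Sym2 V)) [DecidablePred (· ∈ F)]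

theorem genAdj_mul_weight (w : V → V → ℝ) (c : V → ℝ) :
    genAdj G F (fun i j => w i j * (c i * c j)) = diagonal c * genAdj G F w * diagonal c := by
  ext i j
  simp only [genAdj, of_apply, diagonal_mul, mul_diagonal]
  split_ifs <;> ring

theorem genAdj_conformal_mulVec (w : V → V → ℝ) (u H : V → ℝ) :
    genAdj G F (fun i j => w i j * Real.exp (u i + u j)) *ᵥ (fun v => Real.exp (-u v) * H v) =
      diagonal (fun v => Real.exp (u v)) *ᵥ (genAdj G F w *ᵥ H) := by
  have hscale : diagonal (fun v => Real.exp (u v)) *ᵥ (fun v => Real.exp (-u v) * H v) = H := by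
    ext v
    rw [mulVec_diagonal, ← mul_assoc, ← Real.exp_add, add_neg_cancel, Real.exp_zero, one_mul]
  simp_rw [Real.exp_add]
  rw [genAdj_mul_weight, ← mulVec_mulVec, ← mulVec_mulVec, hscale]

end

theorem genAdj_kernel_edge_invariant_general {V : Type*} [Fintype V] [DecidableEq V]
    (G : SimpleGraph V) [DecidableRel G.Adj]
    (F : Set (Sym2 V)) [DecidablePred (· ∈ F)]
    (w : V → V → ℝ)
    (u : V → ℝ) (H : V → ℝ)
    (hH : (genAdj G F w).mulVec H = 0) :
    (genAdj G F (fun i j => w i j * Real.exp (u i + u j))).mulVec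
        (fun v => Real.exp (-u v) * H v) = 0 ∧
    ∀ v₁ v₂, G.Adj v₁ v₂ →
      (Real.exp (-u v₁) * H v₁) * (Real.exp (-u v₂) * H v₂) *
          (w v₁ v₂ * Real.exp (u v₁ + u v₂)) =
        H v₁ * H v₂ * w v₁ v₂ := by
  refine ⟨by rw [genAdj_conformal_mulVec, hH, mulVec_zero], fun v₁ v₂ _ => ?_⟩
  rw [Real.exp_add, Real.exp_neg, Real.exp_neg]
  field_simp

/-- If `H ∈ ker A(F,w)` then, under the conformal change `w̃ = w·e^{u i + u j}`,
the function `H̃ v = e^{-u v} H v` lies in `ker A(F,w̃)`, and the edge function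
`Ψ_H(e) = H(v₁)H(v₂)w(e)` is conformally invariant: `H̃ v₁ · H̃ v₂ · w̃ = H v₁ · H v₂ · w`
on every edge. -/
theorem genAdj_kernel_edge_invariant {V : Type*} [Fintype V] [DecidableEq V]
    (G : SimpleGraph V) [DecidableRel G.Adj]
    (F : Set (Sym2 V)) [DecidablePred (· ∈ F)] (hF : F ⊆ G.edgeSet)
    (w : V → V → ℝ) (hsymm : ∀ i j, w i j = w j i)
    (hw : ∀ i j, G.Adj i j → 0 < w i j)
    (u : V → ℝ) (H : V → ℝ)
    (hH : (genAdj G F w).mulVec H = 0) :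
    (genAdj G F (fun i j => w i j * Real.exp (u i + u j))).mulVec
        (fun v => Real.exp (-u v) * H v) = 0 ∧
    ∀ v₁ v₂, G.Adj v₁ v₂ →
      (Real.exp (-u v₁) * H v₁) * (Real.exp (-u v₂) * H v₂) *
          (w v₁ v₂ * Real.exp (u v₁ + u v₂)) =
        H v₁ * H v₂ * w v₁ v₂ :=
  genAdj_kernel_edge_invariant_general G F w u H hH
end

section
/- For the cycle graph C_n with 4 | n and weight w, the determinant of the adjacency matrix A_w equals (Π_{i even} w(eᵢ) − Π_{i odd} w(eᵢ))², where e₁,...,eₙ is a cyclic enumeration of the edges. In particular det A_w = 0 iff the product of even-indexed edge weights equals the product of odd-indexed edge weights. -/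
/-!
Shifting the columns of `A_w` by one (a cyclic permutation of even length, hence of sign `-1`)
gives a matrix whose `(i, j)` entry vanishes unless `i = j` or `i = j + 2`, so it preserves
parity: it is block diagonal with an even and an odd block of size `m = n / 2`. Each block is a
cyclic bidiagonal matrix, whose determinant has only two permutations contributing, the identity
and the `m`-cycle: `∏ diagonal + (-1)^(m-1) ∏ subdiagonal`. For `m` even the two blocks give
`P_even - P_odd` and `P_odd - P_even`.
-/

open Matrix Finset Equiv

theorem ZMod.sign_addRight_one (n : ℕ) [NeZero n] :
    Perm.sign (Equiv.addRight (1 : ZMod n)) = (-1) ^ (n - 1) := by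
  obtain ⟨k, rfl⟩ := Nat.exists_eq_succ_of_ne_zero (NeZero.ne n)
  have : Equiv.addRight (1 : ZMod (k + 1)) = finRotate (k + 1) :=
    Equiv.ext fun i => (finRotate_apply (i : Fin (k + 1))).symm
  exact (congrArg Perm.sign this).trans (sign_finRotate (k + 1))

theorem ZMod.perm_eq_one_or_addRight_one {m : ℕ} [NeZero m] (σ : Perm (ZMod m))
    (hσ : ∀ i, σ i = i ∨ σ i = i + 1) : σ = 1 ∨ σ = Equiv.addRight 1 := by
  by_cases hfix : ∀ i, σ i = i
  · exact Or.inl (Equiv.ext hfix)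
  push Not at hfix
  obtain ⟨i₀, hi₀⟩ := hfix
  have hstep : ∀ j : ℕ, σ (i₀ + j) = i₀ + j + 1 := by
    intro j
    induction j with
    | zero => simpa using (hσ i₀).resolve_left hi₀
    | succ j ih =>
      rw [Nat.cast_succ, ← add_assoc]
      -- otherwise `σ` takes the value `i₀ + j + 1` twice, which forces `ZMod m` to be trivial
      refine (hσ _).resolve_left fun hfixed => hi₀ ?_
      have : (0 : ZMod m) = 1 := by
        linear_combination -σ.injective (hfixed.trans ih.symm)
      exact (subsingleton_iff_zero_eq_one.mp this).elim _ _
  right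
  ext x
  simpa using hstep (x - i₀).val

section CyclicBidiagonal

variable {R : Type*} {m : ℕ}

def cyclicBidiagonal [Zero R] (a b : ZMod m → R) : Matrix (ZMod m) (ZMod m) R :=
  of fun i j => if i = j then a j else if i = j + 1 then b j else 0

theorem det_cyclicBidiagonal [CommRing R] [Fact (1 < m)] (a b : ZMod m → R) :
    (cyclicBidiagonal a b).det = ∏ i, a i + (-1) ^ (m - 1) * ∏ i, b i := by
  have hvanish : ∀ σ : Perm (ZMod m), σ ≠ 1 → σ ≠ Equiv.addRight 1 →
      ∏ i, cyclicBidiagonal a b (σ i) i = 0 := by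
    intro σ h1 h2
    obtain ⟨i, hi⟩ : ∃ i, σ i ≠ i ∧ σ i ≠ i + 1 := by
      by_contra! h
      exact (ZMod.perm_eq_one_or_addRight_one σ fun i => or_iff_not_imp_left.mpr (h i)).elim h1 h2
    exact prod_eq_zero (mem_univ i) (by simp [cyclicBidiagonal, hi.1, hi.2])
  rw [det_apply', ← sum_subset (subset_univ {1, Equiv.addRight 1}) fun σ _ hσ => by
    simp only [mem_insert, mem_singleton, not_or] at hσ
    rw [hvanish σ hσ.1 hσ.2, mul_zero]]
  rw [sum_pair (by simp [Equiv.ext_iff])]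
  simp [cyclicBidiagonal, ZMod.sign_addRight_one]

end CyclicBidiagonal

namespace ZMod

variable {m : ℕ} [NeZero m]

theorem two_mul_val_add_lt (k : ZMod m) (p : Fin 2) : 2 * k.val + p < 2 * m := by
  have := k.val_lt
  omega

noncomputable def prodFinTwoEquiv : ZMod m × Fin 2 ≃ ZMod (2 * m) :=
  Equiv.ofBijective (fun kp => ((2 * kp.1.val + kp.2 : ℕ) : ZMod (2 * m))) <| by
    refine (Fintype.bijective_iff_injective_and_card _).mpr ⟨fun ⟨k, p⟩ ⟨l, q⟩ h => ?_, ?_⟩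
    · have hval := congrArg ZMod.val h
      simp only [val_cast_of_lt (two_mul_val_add_lt _ _)] at hval
      obtain rfl : p = q := Fin.ext (by omega)
      simpa using val_injective _ (by omega)
    · simp [mul_comm]

theorem prodFinTwoEquiv_apply (k : ZMod m) (p : Fin 2) :
    prodFinTwoEquiv (k, p) = ((2 * k.val + p : ℕ) : ZMod (2 * m)) := rfl

theorem prodFinTwoEquiv_zero_add_one (k : ZMod m) :
    prodFinTwoEquiv (k, 0) + 1 = prodFinTwoEquiv (k, 1) := by
  simp [prodFinTwoEquiv_apply]

theorem prodFinTwoEquiv_add_one (k : ZMod m) (p : Fin 2) :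
    prodFinTwoEquiv (k + 1, p) = prodFinTwoEquiv (k, p) + 2 := by
  have hval : (k + 1).val ≡ k.val + 1 [MOD m] := by
    rw [← natCast_eq_natCast_iff]
    simp
  rw [prodFinTwoEquiv_apply, prodFinTwoEquiv_apply,
    (natCast_eq_natCast_iff _ _ _).mpr ((hval.mul_left' 2).add_right p)]
  push_cast
  ring

theorem prod_prodFinTwoEquiv {M : Type*} [CommMonoid M] (f : ZMod (2 * m) → M) (p : Fin 2) :
    ∏ k, f (prodFinTwoEquiv (k, p)) =
      ∏ i ∈ univ.filter (fun i : Fin (2 * m) => i.val % 2 = p), f (i : ℕ) := by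
  refine prod_nbij' (fun k => ⟨2 * k.val + p, two_mul_val_add_lt k p⟩)
    (fun i => ((i.val / 2 : ℕ) : ZMod m)) ?_ (by simp) ?_ ?_ fun _ _ => rfl
  · intro k _
    simp only [mem_filter, mem_univ, true_and]
    omega
  · intro k _
    have : (2 * k.val + p) / 2 = k.val := by omega
    simp only [this, natCast_zmod_val]
  · intro i hi
    simp only [mem_filter, mem_univ, true_and] at hi
    have : i.val / 2 < m := by omega
    ext
    simp only [val_cast_of_lt this]
    omega

end ZMod

section CycleAdjMatrix

open ZMod

variable {R : Type*} {m : ℕ}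

def cycleAdjMatrix [Zero R] {n : ℕ} (w : ZMod n → R) : Matrix (ZMod n) (ZMod n) R :=
  of fun i j => if j = i + 1 then w i else if i = j + 1 then w j else 0

theorem cycleAdjMatrix_submatrix_addRight_one [Zero R] [NeZero m] (w : ZMod (2 * m) → R) :
    ((cycleAdjMatrix w).submatrix id (Equiv.addRight 1)).submatrix prodFinTwoEquiv
        prodFinTwoEquiv =
      blockDiagonal fun p => cyclicBidiagonal (fun k => w (prodFinTwoEquiv (k, p)))
        (fun k => w (prodFinTwoEquiv (k, p) + 1)) := by
  ext ⟨k, p⟩ ⟨l, q⟩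
  simp only [submatrix_apply, id, coe_addRight, cycleAdjMatrix, cyclicBidiagonal, of_apply,
    blockDiagonal_apply, add_left_inj, prodFinTwoEquiv.injective.eq_iff, Prod.mk.injEq, add_assoc,
    one_add_one_eq_two, ← prodFinTwoEquiv_add_one]
  by_cases hpq : p = q
  · subst hpq
    split_ifs <;> simp_all [eq_comm]
  · simp [hpq, Ne.symm hpq]

theorem det_cycleAdjMatrix [CommRing R] [Fact (1 < m)] (w : ZMod (2 * m) → R) :
    (cycleAdjMatrix w).det =
      -((∏ i ∈ univ.filter (fun i : Fin (2 * m) => Even i.val), w (i : ℕ)) +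
          (-1) ^ (m - 1) * ∏ i ∈ univ.filter (fun i : Fin (2 * m) => Odd i.val), w (i : ℕ)) *
        ((∏ i ∈ univ.filter (fun i : Fin (2 * m) => Odd i.val), w (i : ℕ)) +
          (-1) ^ (m - 1) * ∏ i ∈ univ.filter (fun i : Fin (2 * m) => Even i.val), w (i : ℕ)) := by
  have hodd : Odd (2 * m - 1) := by
    have := (Fact.out : 1 < m)
    rw [Nat.odd_iff]
    omega
  have hdet := det_permute' (Equiv.addRight 1) (cycleAdjMatrix w)
  rw [← det_submatrix_equiv_self prodFinTwoEquiv, cycleAdjMatrix_submatrix_addRight_one,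
    det_blockDiagonal, Fin.prod_univ_two, det_cyclicBidiagonal, det_cyclicBidiagonal,
    sign_addRight_one, hodd.neg_one_pow] at hdet
  have hshift₀ : ∏ k, w (prodFinTwoEquiv (k, 0) + 1) = ∏ k, w (prodFinTwoEquiv (k, 1)) := by
    simp only [prodFinTwoEquiv_zero_add_one]
  have hshift₁ : ∏ k, w (prodFinTwoEquiv (k, 1) + 1) = ∏ k, w (prodFinTwoEquiv (k, 0)) := by
    rw [← Equiv.prod_comp (Equiv.addRight (1 : ZMod m)) fun k => w (prodFinTwoEquiv (k, 0))]
    simp only [coe_addRight, prodFinTwoEquiv_add_one, ← prodFinTwoEquiv_zero_add_one, add_assoc,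
      one_add_one_eq_two]
  have hprod₀ : ∏ k, w (prodFinTwoEquiv (k, 0)) =
      ∏ i ∈ univ.filter (fun i : Fin (2 * m) => Even i.val), w (i : ℕ) := by
    simpa [Nat.even_iff] using prod_prodFinTwoEquiv w 0
  have hprod₁ : ∏ k, w (prodFinTwoEquiv (k, 1)) =
      ∏ i ∈ univ.filter (fun i : Fin (2 * m) => Odd i.val), w (i : ℕ) := by
    simpa [Nat.odd_iff] using prod_prodFinTwoEquiv w 1
  rw [hshift₀, hshift₁, hprod₀, hprod₁] at hdet
  push_cast at hdet
  linear_combination hdet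

end CycleAdjMatrix

theorem det_adjacency_cycle_general (n : ℕ) [NeZero n] (h4 : 4 ∣ n)
    (w : ZMod n → ℝ) :
    (Matrix.of fun i j : ZMod n =>
        if j = i + 1 then w i else if i = j + 1 then w j else 0).det =
      ((∏ i ∈ univ.filter (fun i : Fin n => Even i.val), w ((i : ℕ) : ZMod n)) -
        ∏ i ∈ univ.filter (fun i : Fin n => Odd i.val), w ((i : ℕ) : ZMod n)) ^ 2 := by
  obtain ⟨m, rfl⟩ : ∃ m, n = 2 * m := ⟨n / 2, by omega⟩
  have hm : 1 < m := by
    have := NeZero.ne (2 * m)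
    omega
  have : Fact (1 < m) := ⟨hm⟩
  have hodd : Odd (m - 1) := by
    rw [Nat.odd_iff]
    omega
  have hsign : (-1 : ℝ) ^ (m - 1) = -1 := hodd.neg_one_pow
  rw [show Matrix.of _ = cycleAdjMatrix w from rfl, det_cycleAdjMatrix, hsign]
  ring

/-- For the cycle graph `C_n` with `4 ∣ n`, vertices `ZMod n` and edge `eᵢ = (vᵢ, vᵢ₊₁)`
carrying weight `w i`, the determinant of the weighted adjacency matrix equals
`(Π_{i even} w(eᵢ) − Π_{i odd} w(eᵢ))²`.  In particular it vanishes iff the product of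
the even-indexed edge weights equals the product of the odd-indexed ones. -/
theorem det_adjacency_cycle (n : ℕ) [NeZero n] (h4 : 4 ∣ n)
    (w : ZMod n → ℝ) (hw : ∀ i, 0 < w i) :
    (Matrix.of fun i j : ZMod n =>
        if j = i + 1 then w i else if i = j + 1 then w j else 0).det =
      ((∏ i ∈ univ.filter (fun i : Fin n => Even i.val), w ((i : ℕ) : ZMod n)) -
        ∏ i ∈ univ.filter (fun i : Fin n => Odd i.val), w ((i : ℕ) : ZMod n)) ^ 2 :=
  det_adjacency_cycle_general n h4 w
end
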